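/- Let α, β ∈ (0,1), let w ∈ ℂ with w ≠ 0, and let t_α, t_β ∈ ℂ be nonzero with t_α² = w(w+α²)(1+α²w) and t_β² = w(w+β²)(1+β²w). Then 2·F_{α,1}(w;t_α)·F_{β,1}(w;t_β)·F_{α,1}(w;t_α) = (1 + 2g_{α,β}(w))·F_{α,1}(w;t_α). -/

import Mathlib

open Matrix Complex

/-- `F_{ε,1}(z;t)`. -/
noncomputable def F1 (ε : ℝ) (z t : ℂ) : Matrix (Fin 2) (Fin 2) ℂ :=
  !![1/2 - z * ((ε : ℂ)^2 - 1) / (2 * t), -((ε : ℂ)^2 * (z + 1)) / (2 * t);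
     -(z * (z + 1)) / (2 * t), 1/2 + z * ((ε : ℂ)^2 - 1) / (2 * t)]

/-- `F_{ε,2}(z;t)`. -/
noncomputable def F2 (ε : ℝ) (z t : ℂ) : Matrix (Fin 2) (Fin 2) ℂ :=
  !![1/2 + z * ((ε : ℂ)^2 - 1) / (2 * t), (ε : ℂ)^2 * (z + 1) / (2 * t);
     z * (z + 1) / (2 * t), 1/2 - z * ((ε : ℂ)^2 - 1) / (2 * t)]

/-- `g_{α,β}(w) = w(2w(1+α²β²)+β²(w²+1)+α²(w²+1))/(4·t_α·t_β)`, with a coherent branch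
choice of the square roots `t_α`, `t_β`. -/
noncomputable def gf (α β : ℝ) (w tα tβ : ℂ) : ℂ :=
  w * (2 * w * (1 + (α : ℂ)^2 * (β : ℂ)^2) + (β : ℂ)^2 * (w^2 + 1) + (α : ℂ)^2 * (w^2 + 1))
    / (4 * tα * tβ)

/-- traceless part matrix -/
noncomputable def Mm (ε : ℝ) (z : ℂ) : Matrix (Fin 2) (Fin 2) ℂ :=
  !![-(z * ((ε : ℂ)^2 - 1)), -((ε : ℂ)^2 * (z + 1));
     -(z * (z + 1)), z * ((ε : ℂ)^2 - 1)]

lemma F1_eq (ε : ℝ) (z t : ℂ) (ht : t ≠ 0) :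
    F1 ε z t = (2 * t)⁻¹ • (t • (1 : Matrix (Fin 2) (Fin 2) ℂ) + Mm ε z) := by
  ext i j
  fin_cases i <;> fin_cases j <;>
    simp only [F1, Mm, Matrix.smul_apply, Matrix.add_apply, Matrix.one_apply, smul_eq_mul,
      Matrix.cons_val_zero, Matrix.cons_val_one, Matrix.head_cons, Matrix.of_apply,
      Matrix.cons_val', Matrix.empty_val', Matrix.cons_val_fin_one, Fin.mk_one, Fin.mk_zero,
      if_true, if_false, Fin.one_eq_zero_iff, Fin.zero_eq_one_iff, Ne, OfNat.ofNat_ne_one,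
      not_false_iff, ite_true, ite_false, reduceIte, mul_one, mul_zero, add_zero, zero_add,
        Fin.isValue, Fin.reduceEq, Nat.reduceEqDiff] <;>
    field_simp <;> ring

lemma Mm_sq (ε : ℝ) (z t : ℂ) (ht : t^2 = z * (z + (ε : ℂ)^2) * (1 + (ε : ℂ)^2 * z)) :
    Mm ε z * Mm ε z = (t^2) • (1 : Matrix (Fin 2) (Fin 2) ℂ) := by
  ext i j
  fin_cases i <;> fin_cases j <;>
    simp [Mm, Matrix.mul_apply, Fin.sum_univ_two, Matrix.one_apply] <;>
    first
      | linear_combination ht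
      | linear_combination -ht
      | ring

lemma Mm_anti (α β : ℝ) (w : ℂ) :
    Mm α w * Mm β w + Mm β w * Mm α w
      = (w * (2 * w * (1 + (α : ℂ)^2 * (β : ℂ)^2) + (β : ℂ)^2 * (w^2 + 1)
          + (α : ℂ)^2 * (w^2 + 1))) • (1 : Matrix (Fin 2) (Fin 2) ℂ) := by
  ext i j
  fin_cases i <;> fin_cases j <;>
    simp [Mm, Matrix.mul_apply, Fin.sum_univ_two, Matrix.one_apply] <;> ring

/-- `2·F_{α,1}(w)·F_{β,1}(w)·F_{α,1}(w) = (1 + 2g_{α,β}(w))·F_{α,1}(w)`. -/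
theorem stmt4 (α β : ℝ) (hα : α ∈ Set.Ioo (0 : ℝ) 1) (hβ : β ∈ Set.Ioo (0 : ℝ) 1)
    (w : ℂ) (hw : w ≠ 0) (tα tβ : ℂ) (htα0 : tα ≠ 0) (htβ0 : tβ ≠ 0)
    (htα : tα^2 = w * (w + (α : ℂ)^2) * (1 + (α : ℂ)^2 * w))
    (htβ : tβ^2 = w * (w + (β : ℂ)^2) * (1 + (β : ℂ)^2 * w)) :
    (2 : ℂ) • (F1 α w tα * F1 β w tβ * F1 α w tα)
      = (1 + 2 * gf α β w tα tβ) • F1 α w tα := by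
  set trval : ℂ := w * (2 * w * (1 + (α : ℂ)^2 * (β : ℂ)^2) + (β : ℂ)^2 * (w^2 + 1)
      + (α : ℂ)^2 * (w^2 + 1)) with htr
  set Ma := Mm α w with hMa
  set Mb := Mm β w with hMb
  have hA2 : Ma * Ma = (tα^2) • (1 : Matrix (Fin 2) (Fin 2) ℂ) := Mm_sq α w tα htα
  have hanti : Ma * Mb + Mb * Ma = trval • (1 : Matrix (Fin 2) (Fin 2) ℂ) := Mm_anti α β w
  have hab : Ma * Mb = trval • (1 : Matrix (Fin 2) (Fin 2) ℂ) - Mb * Ma := by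
    rw [← hanti]; abel
  have e1 : Ma * Mb * Ma = trval • Ma - (tα^2) • Mb := by
    have h : Ma * Mb * Ma = (Ma * Mb + Mb * Ma) * Ma - Mb * (Ma * Ma) := by noncomm_ring
    rw [h, hanti, hA2, smul_mul_assoc, one_mul, mul_smul_comm, mul_one]
  have key : (tα • (1 : Matrix (Fin 2) (Fin 2) ℂ) + Ma) * (tβ • 1 + Mb) * (tα • 1 + Ma)
      = (2 * tα * tβ + trval) • (tα • (1 : Matrix (Fin 2) (Fin 2) ℂ) + Ma) := by
    simp only [add_mul, mul_add, smul_mul_assoc, mul_smul_comm, one_mul, mul_one, smul_add,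
      smul_smul]
    rw [e1, hab, hA2]
    module
  rw [F1_eq α w tα htα0, F1_eq β w tβ htβ0]
  simp only [smul_smul, Matrix.smul_mul, Matrix.mul_smul]
  rw [key]
  rw [smul_smul]
  congr 1
  rw [htr, gf]
  field_simp
  ring
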